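/- (Lyapunov inequality underlying Theorem 4.4, one-sided version on ℝ) Let d = 1, let D ⊆ ℝ be an open neighborhood of 0, let Q^{(1)} be a conservative Q-matrix on S, and suppose Q(y) = Q^{(1)} for every y ∈ [0, α1), where α1 > 0. Suppose ρ, h : D∖{0} → (0,∞) are twice continuously differentiable, ℒ^{(j)}ρ(y) ≤ β_j h(y) for all y ∈ D∖{0} and j ∈ S (β ∈ ℝ^N), and ℒ^{(j)}h(y)/h(y) → 0 as y → 0 (within D∖{0}) for every j ∈ S. Suppose there exist c > 0 and ξ ∈ ℝ^N with ξ_j > 0 for all j such that (Q^{(1)}ξ)_j = −c − β_j for every j. Then there exists δ ∈ (0, α1] with (0, δ) ⊆ D such that the function V(y,j) = ρ(y) + ξ_j h(y) satisfies 𝒜V(y,j) ≤ −(c/2) h(y) < 0 for all 0 < y < δ and all j ∈ S. -/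

import Mathlib

/-!
For `0 < y < α1` the switching rates are those of `Q^{(1)}`, so the jump part of `𝒜V(y,j)` is
`(Q^{(1)}ξ)_j h(y) = (-c - β_j) h(y)`, while the diffusion part is
`ℒ^{(j)}ρ(y) + ξ_j ℒ^{(j)}h(y) ≤ β_j h(y) + ξ_j ℒ^{(j)}h(y)`. As `ℒ^{(j)}h = o(h)` at `0`, the
last term is at most `(c/2) h(y)` for small `y > 0`, which leaves `𝒜V(y,j) ≤ -(c/2) h(y)`.
-/

open scoped BigOperators
open Filter

/-- The one-dimensional diffusion generator
`ℒ^{(i)}f(y) = b(y,i) f'(y) + (1/2) a(y,i) f''(y)` in a fixed environment. -/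
noncomputable def diffGen1 (b a : ℝ → ℝ) (f : ℝ → ℝ) (y : ℝ) : ℝ :=
  b y * deriv f y + (1 / 2) * a y * deriv (deriv f) y

/-- The full generator of the one-dimensional regime-switching diffusion:
`𝒜V(y,i) = ℒ^{(i)}V(·,i)(y) + Σ_{j≠i} q_{ij}(y)(V(y,j) − V(y,i))`. -/
noncomputable def hybridGen1 {N : ℕ}
    (b a : ℝ → Fin N → ℝ)
    (Q : ℝ → Matrix (Fin N) (Fin N) ℝ)
    (V : ℝ → Fin N → ℝ) (y : ℝ) (i : Fin N) : ℝ :=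
  diffGen1 (fun z => b z i) (fun z => a z i) (fun z => V z i) y +
    ∑ j ∈ Finset.univ.erase i, Q y i j * (V y j - V y i)

open Topology

lemma eventually_le_mul_of_tendsto_div_zero {α : Type*} {l : Filter α} {f g : α → ℝ}
    (hfg : Tendsto (fun x => f x / g x) l (𝓝 0)) (hg : ∀ᶠ x in l, 0 < g x)
    {ε : ℝ} (hε : 0 < ε) : ∀ᶠ x in l, f x ≤ ε * g x := by
  filter_upwards [hfg.eventually (gt_mem_nhds hε), hg] with x hlt hpos
  exact ((div_lt_iff₀ hpos).1 hlt).le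

lemma deriv_add_const_mul_eventuallyEq {f g : ℝ → ℝ} {y : ℝ} (hf : ContDiffAt ℝ 1 f y)
    (hg : ContDiffAt ℝ 1 g y) (k : ℝ) :
    deriv (fun z => f z + k * g z) =ᶠ[𝓝 y] fun z => deriv f z + k * deriv g z := by
  filter_upwards [hf.eventually (by simp), hg.eventually (by simp)] with z hfz hgz
  have hfz' := hfz.differentiableAt one_ne_zero
  have hgz' := hgz.differentiableAt one_ne_zero
  rw [deriv_fun_add hfz' (hgz'.const_mul k), deriv_const_mul k hgz']

lemma diffGen1_add_const_mul {f g : ℝ → ℝ} {y : ℝ} (hf : ContDiffAt ℝ 2 f y)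
    (hg : ContDiffAt ℝ 2 g y) (k : ℝ) (b a : ℝ → ℝ) :
    diffGen1 b a (fun z => f z + k * g z) y = diffGen1 b a f y + k * diffGen1 b a g y := by
  have hf' : DifferentiableAt ℝ (deriv f) y :=
    (hf.derivWithin (m := 1) (by norm_num)).differentiableAt one_ne_zero
  have hg' : DifferentiableAt ℝ (deriv g) y :=
    (hg.derivWithin (m := 1) (by norm_num)).differentiableAt one_ne_zero
  have hderiv := deriv_add_const_mul_eventuallyEq (hf.of_le one_le_two) (hg.of_le one_le_two) k
  rw [diffGen1, diffGen1, diffGen1, hderiv.eq_of_nhds, hderiv.deriv_eq,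
    deriv_fun_add hf' (hg'.const_mul k), deriv_const_mul k hg']
  ring

lemma Matrix.sum_erase_mul_sub_eq_mulVec {n R : Type*} [Fintype n] [DecidableEq n] [CommRing R]
    (Q : Matrix n n R) {i : n} (hQ : ∑ j, Q i j = 0) (v : n → R) :
    ∑ j ∈ Finset.univ.erase i, Q i j * (v j - v i) = Q.mulVec v i := by
  rw [Finset.sum_erase _ (by simp), Matrix.mulVec, dotProduct]
  simp only [mul_sub, Finset.sum_sub_distrib, ← Finset.sum_mul, hQ, zero_mul, sub_zero]

lemma hybridGen1_add_mul {N : ℕ} (b a : ℝ → Fin N → ℝ) (Q : ℝ → Matrix (Fin N) (Fin N) ℝ)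
    {ρ h : ℝ → ℝ} {y : ℝ} (hρ : ContDiffAt ℝ 2 ρ y) (hh : ContDiffAt ℝ 2 h y)
    (ξ : Fin N → ℝ) {j : Fin N} (hQ : ∑ k, Q y j k = 0) :
    hybridGen1 b a Q (fun z i => ρ z + ξ i * h z) y j =
      diffGen1 (b · j) (a · j) ρ y + ξ j * diffGen1 (b · j) (a · j) h y +
        (Q y).mulVec ξ j * h y := by
  have hjump : ∑ k ∈ Finset.univ.erase j, Q y j k * ((ρ y + ξ k * h y) - (ρ y + ξ j * h y)) =
      (Q y).mulVec ξ j * h y := by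
    simp only [add_sub_add_left_eq_sub, ← sub_mul, ← mul_assoc, ← Finset.sum_mul,
      Matrix.sum_erase_mul_sub_eq_mulVec _ hQ]
  rw [hybridGen1, hjump, diffGen1_add_const_mul hρ hh]

theorem lyapunov_stability_one_sided_general
    (N : ℕ)
    (b a : ℝ → Fin N → ℝ)
    (Q : ℝ → Matrix (Fin N) (Fin N) ℝ)
    (hQrow : ∀ y i, ∑ j, Q y i j = 0)
    (D : Set ℝ) (hD : IsOpen D) (h0D : (0 : ℝ) ∈ D)
    (Q1 : Matrix (Fin N) (Fin N) ℝ)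
    (α1 : ℝ) (hα1 : 0 < α1)
    (hQeq : ∀ y : ℝ, 0 ≤ y → y < α1 → Q y = Q1)
    (ρ h : ℝ → ℝ)
    (hhpos : ∀ y ∈ D \ {0}, 0 < h y)
    (hρC2 : ContDiffOn ℝ 2 ρ (D \ {0}))
    (hhC2 : ContDiffOn ℝ 2 h (D \ {0}))
    (β : Fin N → ℝ)
    (hL : ∀ y ∈ D \ {0}, ∀ j, diffGen1 (fun z => b z j) (fun z => a z j) ρ y ≤ β j * h y)
    (hLh : ∀ j, Tendsto (fun y => diffGen1 (fun z => b z j) (fun z => a z j) h y / h y)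
      (nhdsWithin 0 (D \ {0})) (nhds 0))
    (c : ℝ) (hc : 0 < c)
    (ξ : Fin N → ℝ)
    (hfred : ∀ j, Q1.mulVec ξ j = -c - β j) :
    ∃ δ : ℝ, 0 < δ ∧ δ ≤ α1 ∧ Set.Ioo (0 : ℝ) δ ⊆ D ∧
      ∀ y : ℝ, 0 < y → y < δ → ∀ j,
        hybridGen1 b a Q (fun z i => ρ z + ξ i * h z) y j ≤ -(c / 2) * h y ∧
        -(c / 2) * h y < 0 := by
  have hU : ∀ᶠ y in 𝓝[>] 0, y ∈ D \ {0} :=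
    (eventually_nhdsWithin_of_eventually_nhds (hD.mem_nhds h0D)).and self_mem_nhdsWithin
      |>.mono fun y hy => ⟨hy.1, ne_of_gt hy.2⟩
  have hle : 𝓝[>] (0 : ℝ) ≤ 𝓝[D \ {0}] 0 :=
    tendsto_nhdsWithin_iff.2 ⟨tendsto_id.mono_left nhdsWithin_le_nhds, hU⟩
  have hsmall : ∀ᶠ y in 𝓝[>] 0, ∀ j,
      ξ j * diffGen1 (b · j) (a · j) h y ≤ c / 2 * h y := by
    refine eventually_all.2 fun j => eventually_le_mul_of_tendsto_div_zero ?_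
      (hU.mono hhpos) (half_pos hc)
    simpa only [mul_div_assoc, mul_zero] using ((hLh j).mono_left hle).const_mul (ξ j)
  obtain ⟨u, hu, hsub⟩ := mem_nhdsGT_iff_exists_Ioo_subset.1 (hU.and hsmall)
  refine ⟨min u α1, lt_min hu hα1, min_le_right _ _,
    fun y hy => (hsub ⟨hy.1, hy.2.trans_le (min_le_left _ _)⟩).1.1, ?_⟩
  intro y hy0 hyδ j
  obtain ⟨hyU, hsmall_y⟩ := hsub ⟨hy0, hyδ.trans_le (min_le_left _ _)⟩
  have hUy : D \ {0} ∈ 𝓝 y := (hD.sdiff isClosed_singleton).mem_nhds hyU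
  have hhy := hhpos y hyU
  rw [hybridGen1_add_mul b a Q (hρC2.contDiffAt hUy) (hhC2.contDiffAt hUy) ξ (hQrow y j),
    hQeq y hy0.le (hyδ.trans_le (min_le_right _ _)), hfred]
  constructor
  · linarith [hL y hyU j, hsmall_y j]
  · exact mul_neg_of_neg_of_pos (by linarith) hhy

/-- (Lyapunov inequality underlying Theorem 4.4, one-sided version on ℝ):
with `Q(y) = Q^{(1)}` on `[0, α1)`, `ℒ^{(j)}ρ ≤ β_j h` on `D∖{0}`,
`ℒ^{(j)}h/h → 0` at `0`, and `(Q^{(1)}ξ)_j = −c − β_j` with `ξ ≫ 0`, `c > 0`,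
there exists `δ ∈ (0, α1]` with `(0, δ) ⊆ D` such that `V(y,j) = ρ(y) + ξ_j h(y)`
satisfies `𝒜V(y,j) ≤ −(c/2) h(y) < 0` for all `0 < y < δ` and all `j`. -/
theorem lyapunov_stability_one_sided
    (N : ℕ) (hN : 1 ≤ N)
    (b a : ℝ → Fin N → ℝ)
    (ha : ∀ y i, 0 ≤ a y i)
    (Q : ℝ → Matrix (Fin N) (Fin N) ℝ)
    (hQoff : ∀ y i j, i ≠ j → 0 ≤ Q y i j)
    (hQrow : ∀ y i, ∑ j, Q y i j = 0)
    (D : Set ℝ) (hD : IsOpen D) (h0D : (0 : ℝ) ∈ D)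
    (Q1 : Matrix (Fin N) (Fin N) ℝ)
    (hQ1off : ∀ i j, i ≠ j → 0 ≤ Q1 i j)
    (hQ1row : ∀ i, ∑ j, Q1 i j = 0)
    (α1 : ℝ) (hα1 : 0 < α1)
    (hQeq : ∀ y : ℝ, 0 ≤ y → y < α1 → Q y = Q1)
    (ρ h : ℝ → ℝ)
    (hρpos : ∀ y ∈ D \ {0}, 0 < ρ y)
    (hhpos : ∀ y ∈ D \ {0}, 0 < h y)
    (hρC2 : ContDiffOn ℝ 2 ρ (D \ {0}))
    (hhC2 : ContDiffOn ℝ 2 h (D \ {0}))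
    (β : Fin N → ℝ)
    (hL : ∀ y ∈ D \ {0}, ∀ j, diffGen1 (fun z => b z j) (fun z => a z j) ρ y ≤ β j * h y)
    (hLh : ∀ j, Tendsto (fun y => diffGen1 (fun z => b z j) (fun z => a z j) h y / h y)
      (nhdsWithin 0 (D \ {0})) (nhds 0))
    (c : ℝ) (hc : 0 < c)
    (ξ : Fin N → ℝ) (hξ : ∀ j, 0 < ξ j)
    (hfred : ∀ j, Q1.mulVec ξ j = -c - β j) :
    ∃ δ : ℝ, 0 < δ ∧ δ ≤ α1 ∧ Set.Ioo (0 : ℝ) δ ⊆ D ∧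
      ∀ y : ℝ, 0 < y → y < δ → ∀ j,
        hybridGen1 b a Q (fun z i => ρ z + ξ i * h z) y j ≤ -(c / 2) * h y ∧
        -(c / 2) * h y < 0 :=
  lyapunov_stability_one_sided_general N b a Q hQrow D hD h0D Q1 α1 hα1 hQeq ρ h hhpos hρC2 hhC2 β
    hL hLh c hc ξ hfred
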